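/- arXiv:2003.06375 — 8 statements merged into one kernel-verified Lean document; each statement's English description precedes it below -/
import Mathlib

section
/- Let B and C be bicategories, let F, G : B ⥤ C be pseudofunctors, and let η : F ⟶ G be a strong (pseudo)natural transformation. Suppose that for every object X of B the component η_X : F X ⟶ G X is an equivalence in C, i.e. there exist a 1-cell g_X : G X ⟶ F X and invertible 2-cells g_X ∘ η_X ≅ 𝟙_{F X} and η_X ∘ g_X ≅ 𝟙_{G X}. Then η is an equivalence in the bicategory of pseudofunctors from B to C (whose 1-cells are strong natural transformations and whose 2-cells are modifications): there exist a strong natural transformation θ : G ⟶ F and invertible modifications from the composite η followed by θ to the identity transformation of F, and from the composite θ followed by η to the identity transformation of G. -/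
/-!
Each `η.app X` is an equivalence, so it can be made the right adjoint of a 1-cell `g X` with
invertible unit and counit. The naturality constraints of the inverse are the mates of the inverted
constraints of `η` (doctrinal adjunction): since taking mates commutes with whiskering and with
pasting of squares, the coherence axioms of `η` transport to the inverse, and mates of invertible
2-cells along adjoint equivalences are invertible. The counits and units are then the components
of the two invertible modifications; their naturality is the compatibility of mates with counits
and units.
-/

open CategoryTheory CategoryTheory.Bicategory

universe w₁ w₂ v₁ v₂ u₁ u₂

namespace CategoryTheory.Bicategory

variable {B : Type u₁} [Bicategory.{w₁, v₁} B]

def Equivalence.adjunction {a b : B} (e : a ≌ b) : e.hom ⊣ e.inv where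
  unit := e.unit.hom
  counit := e.counit.hom
  left_triangle := e.left_triangle_hom
  right_triangle := e.right_triangle_hom

variable {c d e f : B} {g g' : c ⟶ e} {h h' : d ⟶ f} {l₁ : c ⟶ d} {r₁ : d ⟶ c}
  {l₂ : e ⟶ f} {r₂ : f ⟶ e} (adj₁ : l₁ ⊣ r₁) (adj₂ : l₂ ⊣ r₂)

lemma mateEquiv_whiskerRight_comp (φ : g' ⟶ g) (α : g ≫ l₂ ⟶ l₁ ≫ h) :
    mateEquiv adj₁ adj₂ (φ ▷ l₂ ≫ α) = r₁ ◁ φ ≫ mateEquiv adj₁ adj₂ α := by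
  rw [mateEquiv_apply', mateEquiv_apply']
  calc _ = 𝟙 _ ⊗≫ r₁ ◁ (g' ◁ adj₂.unit ≫ φ ▷ (l₂ ≫ r₂)) ⊗≫ r₁ ◁ α ▷ r₂ ⊗≫
        adj₁.counit ▷ h ▷ r₂ ⊗≫ 𝟙 _ := by bicategory
    _ = _ := by rw [whisker_exchange]; bicategory

lemma mateEquiv_comp_whiskerLeft (α : g ≫ l₂ ⟶ l₁ ≫ h) (ψ : h ⟶ h') :
    mateEquiv adj₁ adj₂ (α ≫ l₁ ◁ ψ) = mateEquiv adj₁ adj₂ α ≫ ψ ▷ r₂ := by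
  rw [mateEquiv_apply', mateEquiv_apply']
  calc _ = 𝟙 _ ⊗≫ r₁ ◁ g ◁ adj₂.unit ⊗≫ r₁ ◁ α ▷ r₂ ⊗≫
        ((r₁ ≫ l₁) ◁ ψ ≫ adj₁.counit ▷ h') ▷ r₂ ⊗≫ 𝟙 _ := by bicategory
    _ = _ := by rw [whisker_exchange]; bicategory

lemma isIso_mateEquiv_symm [IsIso adj₁.unit] [IsIso adj₂.counit] (β : r₁ ≫ g ⟶ h ≫ r₂)
    [IsIso β] : IsIso ((mateEquiv adj₁ adj₂).symm β) := by
  rw [mateEquiv_symm_apply']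
  dsimp only [bicategoricalComp]
  infer_instance

lemma whiskerLeft_mateEquiv_symm_comp_counit (β : r₁ ≫ g ⟶ h ≫ r₂) :
    r₁ ◁ (mateEquiv adj₁ adj₂).symm β ≫ (α_ _ _ _).inv ≫ adj₁.counit ▷ h ≫ (λ_ h).hom =
      (α_ _ _ _).inv ≫ β ▷ l₂ ≫ (α_ _ _ _).hom ≫ h ◁ adj₂.counit ≫ (ρ_ h).hom := by
  rw [mateEquiv_symm_apply']
  calc _ = 𝟙 _ ⊗≫ r₁ ◁ adj₁.unit ▷ (g ≫ l₂) ⊗≫ ((r₁ ≫ l₁) ◁ ((α_ _ _ _).inv ≫ β ▷ l₂ ≫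
        (α_ _ _ _).hom ≫ h ◁ adj₂.counit ≫ (ρ_ h).hom) ≫ adj₁.counit ▷ h) ⊗≫ 𝟙 _ := by
        bicategory
    _ = 𝟙 _ ⊗≫ rightZigzag adj₁.unit adj₁.counit ▷ (g ≫ l₂) ⊗≫ β ▷ l₂ ⊗≫
        h ◁ adj₂.counit ⊗≫ 𝟙 _ := by
        rw [whisker_exchange]; bicategory
    _ = _ := by rw [adj₁.right_triangle]; bicategory

lemma unit_comp_whiskerLeft_eq_mateEquiv_symm (β : r₁ ≫ g ⟶ h ≫ r₂) :
    (λ_ g).inv ≫ adj₁.unit ▷ g ≫ (α_ _ _ _).hom ≫ l₁ ◁ β =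
      (ρ_ g).inv ≫ g ◁ adj₂.unit ≫ (α_ _ _ _).inv ≫ (mateEquiv adj₁ adj₂).symm β ▷ r₂ ≫
        (α_ _ _ _).hom := by
  rw [mateEquiv_symm_apply']
  symm
  calc _ = 𝟙 _ ⊗≫ ((𝟙 c ≫ g) ◁ adj₂.unit ≫ (adj₁.unit ▷ g) ▷ (l₂ ≫ r₂)) ⊗≫
        l₁ ◁ β ▷ l₂ ▷ r₂ ⊗≫ l₁ ◁ h ◁ adj₂.counit ▷ r₂ ⊗≫ 𝟙 _ := by
        bicategory
    _ = 𝟙 _ ⊗≫ adj₁.unit ▷ g ⊗≫ l₁ ◁ ((r₁ ≫ g) ◁ adj₂.unit ≫ β ▷ (l₂ ≫ r₂)) ⊗≫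
        l₁ ◁ h ◁ adj₂.counit ▷ r₂ ⊗≫ 𝟙 _ := by
        rw [whisker_exchange]; bicategory
    _ = 𝟙 _ ⊗≫ adj₁.unit ▷ g ⊗≫ l₁ ◁ β ⊗≫
        l₁ ◁ h ◁ rightZigzag adj₂.unit adj₂.counit ⊗≫ 𝟙 _ := by
        rw [whisker_exchange]; bicategory
    _ = _ := by rw [adj₂.right_triangle]; bicategory

end CategoryTheory.Bicategory

namespace CategoryTheory.Oplax

variable {B : Type u₁} [Bicategory.{w₁, v₁} B] {C : Type u₂} [Bicategory.{w₂, v₂} C]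
  {F G : B ⥤ᵒᵖᴸ C}

def StrongTrans.toLax (η : StrongTrans F G) : LaxTrans F G where
  app := η.app
  naturality f := (η.naturality f).inv
  naturality_naturality β := by
    rw [Iso.inv_comp_eq, ← η.naturality_naturality_assoc, Iso.hom_inv_id, Category.comp_id]
  naturality_id a := by
    rw [Iso.inv_comp_eq, η.naturality_id_assoc]
    simp
  naturality_comp f g := by
    rw [Iso.inv_comp_eq, η.naturality_comp_assoc]
    simp

noncomputable def LaxTrans.leftAdjointTrans (η : LaxTrans F G) {g : ∀ a, G.obj a ⟶ F.obj a}
    (adj : ∀ a, g a ⊣ η.app a) : OplaxTrans G F where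
  app := g
  naturality f := (Bicategory.mateEquiv (adj _) (adj _)).symm (η.naturality f)
  naturality_naturality {a b f f'} β := (Bicategory.mateEquiv (adj a) (adj b)).injective <| by
    rw [mateEquiv_whiskerRight_comp, mateEquiv_comp_whiskerLeft, Equiv.apply_symm_apply,
      Equiv.apply_symm_apply, η.naturality_naturality]
  naturality_id a := (Bicategory.mateEquiv (adj a) (adj a)).injective <| by
    rw [mateEquiv_comp_whiskerLeft, mateEquiv_whiskerRight_comp, Equiv.apply_symm_apply,
      η.naturality_id, mateEquiv_leftUnitor_hom_rightUnitor_inv]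
  naturality_comp {a b c} f h := (Bicategory.mateEquiv (adj a) (adj c)).injective <| by
    have pasting := Bicategory.mateEquiv_vcomp (adj a) (adj b) (adj c)
      ((Bicategory.mateEquiv (adj a) (adj b)).symm (η.naturality f))
      ((Bicategory.mateEquiv (adj b) (adj c)).symm (η.naturality h))
    rw [Equiv.apply_symm_apply, Equiv.apply_symm_apply] at pasting
    rw [mateEquiv_comp_whiskerLeft, mateEquiv_whiskerRight_comp, Equiv.apply_symm_apply,
      η.naturality_comp]
    exact congrArg (_ ≫ ·) pasting.symm

namespace StrongTrans

open scoped OplaxTrans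

variable (η : StrongTrans F G) {g : ∀ a, G.obj a ⟶ F.obj a}
  (adj : ∀ a, g a ⊣ η.app a) [∀ a, IsIso (adj a).unit] [∀ a, IsIso (adj a).counit]

instance {a b : B} (f : a ⟶ b) : IsIso ((η.toLax.leftAdjointTrans adj).naturality f) :=
  isIso_mateEquiv_symm (adj a) (adj b) (η.naturality f).inv

noncomputable def pseudoInverse : StrongTrans G F :=
  mkOfOplax' (η.toLax.leftAdjointTrans adj)

noncomputable def compPseudoInverseIso : η.toOplax ≫ (η.pseudoInverse adj).toOplax ≅ 𝟙 F :=
  OplaxTrans.isoMk (fun a => (asIso (adj a).counit : η.app a ≫ g a ≅ 𝟙 _)) fun {a b} f => by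
    change F.map f ◁ (adj b).counit ≫ (ρ_ _).hom ≫ (λ_ _).inv =
      ((α_ _ _ _).inv ≫ (η.naturality f).hom ▷ g b ≫ (α_ _ _ _).hom ≫
        η.app a ◁ (Bicategory.mateEquiv (adj a) (adj b)).symm (η.naturality f).inv ≫
          (α_ _ _ _).inv) ≫ (adj a).counit ▷ F.map f
    rw [← cancel_mono (λ_ _).hom]
    simp [whiskerLeft_mateEquiv_symm_comp_counit]

noncomputable def pseudoInverseCompIso : (η.pseudoInverse adj).toOplax ≫ η.toOplax ≅ 𝟙 G :=
  OplaxTrans.isoMk (fun a => (asIso (adj a).unit : 𝟙 _ ≅ g a ≫ η.app a).symm) fun {a b} f => by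
    change G.map f ◁ inv (adj b).unit ≫ (ρ_ _).hom ≫ (λ_ _).inv =
      ((α_ _ _ _).inv ≫ (Bicategory.mateEquiv (adj a) (adj b)).symm (η.naturality f).inv ▷
        η.app b ≫ (α_ _ _ _).hom ≫ g a ◁ (η.naturality f).hom ≫ (α_ _ _ _).inv) ≫
          inv (adj a).unit ▷ G.map f
    rw [← cancel_epi ((ρ_ _).inv ≫ G.map f ◁ (adj b).unit)]
    simp only [Category.assoc]
    rw [← reassoc_of% unit_comp_whiskerLeft_eq_mateEquiv_symm (adj a) (adj b)]
    simp

end StrongTrans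

end CategoryTheory.Oplax

open scoped CategoryTheory.Pseudofunctor.StrongTrans CategoryTheory.Oplax.OplaxTrans

/-- Lemma 3.1 (equivalence case): a strong natural transformation between pseudofunctors
whose components are all equivalences is an equivalence in the bicategory of
pseudofunctors: it admits a pseudo-inverse up to invertible modifications. -/
theorem strongNatTrans_equivalence_of_pointwise_equivalence
    {B : Type u₁} [Bicategory.{w₁, v₁} B] {C : Type u₂} [Bicategory.{w₂, v₂} C]
    (F G : Pseudofunctor B C) (η : F ⟶ G)
    (h : ∀ X : B, ∃ g : G.obj X ⟶ F.obj X,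
      Nonempty (η.app X ≫ g ≅ 𝟙 (F.obj X)) ∧ Nonempty (g ≫ η.app X ≅ 𝟙 (G.obj X))) :
    ∃ θ : G ⟶ F,
      Nonempty ((show F.toOplax ⟶ F.toOplax from (η ≫ θ).toOplax.toOplax) ≅
          (show F.toOplax ⟶ F.toOplax from (𝟙 F : F ⟶ F).toOplax.toOplax)) ∧
      Nonempty ((show G.toOplax ⟶ G.toOplax from (θ ≫ η).toOplax.toOplax) ≅
          (show G.toOplax ⟶ G.toOplax from (𝟙 G : G ⟶ G).toOplax.toOplax)) := by
  choose g hu hc using h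
  let e X : G.toOplax.obj X ≌ F.toOplax.obj X := .mkOfAdjointifyCounit (hc X).some.symm (hu X).some
  let adj X : (e X).hom ⊣ η.toOplax.app X := (e X).adjunction
  have : ∀ X, IsIso (adj X).unit := fun X => inferInstanceAs (IsIso (e X).unit.hom)
  have : ∀ X, IsIso (adj X).counit := fun X => inferInstanceAs (IsIso (e X).counit.hom)
  exact ⟨.mkOfOplax (η.toOplax.pseudoInverse adj),
    ⟨η.toOplax.compPseudoInverseIso adj⟩, ⟨η.toOplax.pseudoInverseCompIso adj⟩⟩
end

section
/- Let F : A ⥤ B be a functor and let P_F be its iso-comma category, with projections p : P_F ⥤ A and q : P_F ⥤ B. Then: (1) the functor s : A ⥤ P_F sending a to (a, F.obj a, identity isomorphism) satisfies p ∘ s = 𝟭_A, the functor p is an equivalence of categories with s as an equivalence inverse, and p is an isofibration, so p is a surjective equivalence; (2) the induced functor (p, q) : P_F ⥤ A × B is a discrete isofibration: for every object (a, b, β) of P_F and every pair of isomorphisms u : a' ≅ a in A and v : b' ≅ b in B, there is a unique object (a', b', β') of P_F together with an isomorphism (a', b', β') ≅ (a, b, β) in P_F whose two components are u and v. -/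
/-!
Every object `(a, b, β)` of `P_F` is isomorphic, via `(𝟙 a, β)`, to `s a = (a, F a, 𝟙)`, and
`p ∘ s = 𝟭` on the nose; hence `p` is an equivalence with inverse `s`. Given an object
`(a, b, β)` and isomorphisms `u : a' ≅ a`, `v : b' ≅ b`, the commuting square of a morphism with
components `u`, `v` forces the structure isomorphism of its source to be `v⁻¹ ∘ β ∘ F u`,
and that choice does give such an isomorphism. This is the discrete isofibration property
of `(p, q)`, and taking `v = 𝟙` shows that `p` is an isofibration.
-/

open CategoryTheory CategoryTheory.Limits

universe v₁ v₂ u₁ u₂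

variable {A : Type u₁} [Category.{v₁} A] {B : Type u₂} [Category.{v₂} B]

/-- A functor is an isofibration if every isomorphism whose domain is in the image
can be lifted. -/
def Isofibration (F : A ⥤ B) : Prop :=
  ∀ (a : A) (b : B) (β : F.obj a ≅ b),
    ∃ (a' : A) (α : a ≅ a') (h : F.obj a' = b), F.mapIso α ≪≫ eqToIso h = β

/-- The iso-comma category of a functor `F : A ⥤ B`: objects are triples `(a, b, β)` with
`β : F.obj a ≅ b`. -/
abbrev IsoComma (F : A ⥤ B) : Type _ :=
  ObjectProperty.FullSubcategory (fun X : Comma F (𝟭 B) => IsIso X.hom)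

namespace IsoComma

variable (F : A ⥤ B)

/-- Build an object of the iso-comma category. -/
def mk (a : A) (b : B) (β : F.obj a ≅ b) : IsoComma F :=
  ⟨⟨a, b, β.hom⟩, inferInstance⟩

/-- First projection of the iso-comma category. -/
def p : IsoComma F ⥤ A :=
  ObjectProperty.ι _ ⋙ Comma.fst F (𝟭 B)

/-- Second projection of the iso-comma category. -/
def q : IsoComma F ⥤ B :=
  ObjectProperty.ι _ ⋙ Comma.snd F (𝟭 B)

/-- The canonical section of the first projection, sending `a` to
`(a, F.obj a, Iso.refl _)`. -/
def s : A ⥤ IsoComma F where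
  obj a := mk F a (F.obj a) (Iso.refl _)
  map {a a'} u := ObjectProperty.homMk (show (⟨a, F.obj a, 𝟙 _⟩ : Comma F (𝟭 B)) ⟶ ⟨a', F.obj a', 𝟙 _⟩ from
    { left := u
      right := F.map u })

end IsoComma

namespace IsoComma

variable {F : A ⥤ B}

noncomputable def iso (X : IsoComma F) : F.obj X.obj.left ≅ X.obj.right :=
  haveI := X.property
  asIso X.obj.hom

@[simp] lemma iso_hom (X : IsoComma F) : (iso X).hom = X.obj.hom := rfl

@[simps!]
def isoMk {X Y : IsoComma F} (u : X.obj.left ≅ Y.obj.left) (v : X.obj.right ≅ Y.obj.right)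
    (w : F.map u.hom ≫ Y.obj.hom = X.obj.hom ≫ v.hom) : X ≅ Y :=
  ObjectProperty.isoMk _ (Comma.isoMk u v w)

variable (F) in
noncomputable def pCompSIso : p F ⋙ s F ≅ 𝟭 (IsoComma F) :=
  NatIso.ofComponents (fun X => isoMk (Iso.refl _) (iso X) (by simp [p, s, mk])) fun f =>
    ObjectProperty.hom_ext _ (Comma.hom_ext _ _ (by simp [p, s, mk]) (by simp [p, s, mk]))

variable (F) in
noncomputable def equivalence : IsoComma F ≌ A :=
  .mk (p F) (s F) (pCompSIso F).symm (Iso.refl _)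

noncomputable def liftIso (X : IsoComma F) {a' : A} {b' : B} (u : a' ≅ X.obj.left)
    (v : b' ≅ X.obj.right) : mk F a' b' (F.mapIso u ≪≫ iso X ≪≫ v.symm) ≅ X :=
  isoMk u v (by simp [mk])

lemma eq_of_mk_iso {X : IsoComma F} {a' : A} {b' : B} {β' : F.obj a' ≅ b'}
    {u : a' ≅ X.obj.left} {v : b' ≅ X.obj.right} (e : mk F a' b' β' ≅ X)
    (hu : (p F).mapIso e = u) (hv : (q F).mapIso e = v) :
    β' = F.mapIso u ≪≫ iso X ≪≫ v.symm := by
  have hw : β'.hom ≫ v.hom = F.map u.hom ≫ X.obj.hom := by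
    subst hu hv
    exact e.hom.hom.w.symm
  ext
  change β'.hom = F.map u.hom ≫ X.obj.hom ≫ v.inv
  rw [← Category.assoc, Iso.eq_comp_inv, hw]

lemma isofibration_p : Isofibration (p F) := fun X a β =>
  ⟨_, (liftIso X β.symm (Iso.refl _)).symm, rfl, by ext; exact Category.comp_id β.hom⟩

end IsoComma

/-- Proposition 5.2: for a functor `F : A ⥤ B`, (1) the canonical section `s` of the
projection `p` of the iso-comma category witnesses `p` as a surjective equivalence
(an equivalence of categories that is moreover an isofibration), and (2) the pair of
projections `(p, q) : P_F ⥤ A × B` is a discrete isofibration: any pair of isomorphisms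
into the two components of an object of `P_F` lifts uniquely. -/
theorem isoComma_projection_surjective_equivalence_and_discrete_isofibration
    (F : A ⥤ B) :
    IsoComma.s F ⋙ IsoComma.p F = 𝟭 A ∧
    Nonempty (IsoComma.p F ⋙ IsoComma.s F ≅ 𝟭 (IsoComma F)) ∧
    (IsoComma.p F).IsEquivalence ∧
    Isofibration (IsoComma.p F) ∧
    (∀ (X : IsoComma F) (a' : A) (b' : B) (u : a' ≅ (IsoComma.p F).obj X)
        (v : b' ≅ (IsoComma.q F).obj X),
      ∃! β' : F.obj a' ≅ b',
        ∃ e : IsoComma.mk F a' b' β' ≅ X,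
          (IsoComma.p F).mapIso e = u ∧ (IsoComma.q F).mapIso e = v) := by
  refine ⟨rfl, ⟨IsoComma.pCompSIso F⟩, (IsoComma.equivalence F).isEquivalence_functor,
    IsoComma.isofibration_p, fun X a' b' u v => ⟨_, ⟨IsoComma.liftIso X u v, rfl, rfl⟩, ?_⟩⟩
  rintro β' ⟨e, hu, hv⟩
  exact IsoComma.eq_of_mk_iso e hu hv
end

section
/- Let j : A ⥤ C and g : B ⥤ C be functors and let fst : Comma j g ⥤ A be the first projection from the comma category. The following are equivalent: (1) g admits a left adjoint relative to j, i.e. there exist a functor f : A ⥤ B and a natural transformation θ : j ⟶ f ⋙ g such that for all objects a of A and b of B the map Hom_B(f.obj a, b) → Hom_C(j.obj a, g.obj b) sending α to θ.app a ≫ g.map α is a bijection; (2) fst admits a left adjoint L with fst ∘ L = 𝟭_A and an adjunction L ⊣ fst whose unit is the identity; (3) fst admits a left adjoint whose adjunction unit is a natural isomorphism. -/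
open CategoryTheory

universe v₁ v₂ v₃ u₁ u₂ u₃

/-!
A morphism `Y ⟶ X` in `Comma j g` is a pair `(u, β)` with `j.map u ≫ X.hom = Y.hom ≫ g.map β`.
Hence `m ↦ m.left` is bijective on morphisms out of `Y` exactly when `Y.hom` is a universal arrow
from `j.obj Y.left` to `g`. A left adjoint of `fst` with invertible unit, and a left adjoint of `g`
relative to `j`, both amount to a choice of such a universal object over every `a : A`.
-/

open Function

namespace CategoryTheory.Comma

variable {A : Type u₁} [Category.{v₁} A] {B : Type u₂} [Category.{v₂} B]
  {T : Type u₃} [Category.{v₃} T] {L : A ⥤ T} {R : B ⥤ T}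

theorem bijective_left_iff_bijective_hom_comp_map (Y : Comma L R) :
    (∀ X : Comma L R, Bijective fun m : Y ⟶ X => m.left) ↔
      ∀ b : B, Bijective fun β : Y.right ⟶ b => Y.hom ≫ R.map β := by
  constructor
  · intro hY b
    refine ⟨fun β₁ β₂ hβ => ?_, fun ψ => ?_⟩
    · let X : Comma L R := ⟨Y.left, b, Y.hom ≫ R.map β₁⟩
      let m₁ : Y ⟶ X := ⟨𝟙 Y.left, β₁, by simp [X]⟩
      let m₂ : Y ⟶ X := ⟨𝟙 Y.left, β₂, by simp [X, hβ]⟩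
      have hm : m₁ = m₂ := (hY X).injective rfl
      exact congrArg CommaMorphism.right hm
    · obtain ⟨m, hm⟩ := (hY ⟨Y.left, b, ψ⟩).surjective (𝟙 Y.left)
      refine ⟨m.right, ?_⟩
      simpa [hm] using m.w.symm
  · intro hY X
    refine ⟨fun m₁ m₂ hm => ?_, fun u => ?_⟩
    · refine hom_ext _ _ hm ((hY X.right).injective ?_)
      simp only [← m₁.w, ← m₂.w, hm]
    · obtain ⟨β, hβ⟩ := (hY X.right).surjective (L.map u ≫ X.hom)
      exact ⟨⟨u, β, hβ.symm⟩, rfl⟩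

variable {D : Type*} [Category D]

def lift (F : D ⥤ A) (G : D ⥤ B) (α : F ⋙ L ⟶ G ⋙ R) : D ⥤ Comma L R where
  obj d := ⟨F.obj d, G.obj d, α.app d⟩
  map u := ⟨F.map u, G.map u, α.naturality u⟩

noncomputable def liftAdjunction (f : A ⥤ B) (θ : L ⟶ f ⋙ R)
    (hθ : ∀ a b, Bijective fun β : f.obj a ⟶ b => θ.app a ≫ R.map β) :
    lift (𝟭 A) f θ ⊣ fst L R :=
  Adjunction.mkOfHomEquiv
    { homEquiv a X := Equiv.ofBijective (fun m => m.left)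
        ((bijective_left_iff_bijective_hom_comp_map ((lift (𝟭 A) f θ).obj a)).2 (hθ a) X)
      homEquiv_naturality_left_symm u v := by
        rw [Equiv.symm_apply_eq]
        exact congrArg (u ≫ ·) (Equiv.ofBijective_apply_symm_apply _ _ v).symm
      homEquiv_naturality_right _ _ := rfl }

theorem liftAdjunction_unit (f : A ⥤ B) (θ : L ⟶ f ⋙ R)
    (hθ : ∀ a b, Bijective fun β : f.obj a ⟶ b => θ.app a ≫ R.map β) :
    (liftAdjunction f θ hθ).unit = 𝟙 (𝟭 A) := by
  ext a
  rfl

def relativeUnit {F : A ⥤ Comma L R} (η : 𝟭 A ⟶ F ⋙ fst L R) : L ⟶ (F ⋙ snd L R) ⋙ R :=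
  Functor.whiskerRight η L ≫ Functor.whiskerLeft F (natTrans L R)

theorem bijective_relativeUnit_app_comp_map {F : A ⥤ Comma L R} (adj : F ⊣ fst L R)
    [IsIso adj.unit] (a : A) (b : B) :
    Bijective fun β : (F.obj a).right ⟶ b => (relativeUnit adj.unit).app a ≫ R.map β := by
  have hF : ∀ X : Comma L R, Bijective fun m : F.obj a ⟶ X => m.left := fun X => by
    have h : (fun m : F.obj a ⟶ X => m.left) =
        (adj.homEquiv a X).trans (asIso (adj.unit.app a)).homFromEquiv := by
      funext m
      simp [Adjunction.homEquiv_unit]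
    exact h ▸ Equiv.bijective _
  have h : (fun β : (F.obj a).right ⟶ b => (relativeUnit adj.unit).app a ≫ R.map β) =
      (asIso (L.map (adj.unit.app a))).homFromEquiv.symm ∘ fun β => (F.obj a).hom ≫ R.map β := by
    funext β
    simp [relativeUnit]
  exact h ▸ (Equiv.bijective _).comp ((bijective_left_iff_bijective_hom_comp_map _).1 hF b)

end CategoryTheory.Comma

/-- Lemma 8.1: for functors `j : A ⥤ C` and `g : B ⥤ C`, the following are equivalent:
(1) `g` admits a left adjoint relative to `j`; (2) the first projection of the comma
category `Comma j g` admits a left adjoint with identity unit (in particular it is a strict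
retraction); (3) the first projection admits a left adjoint whose unit is invertible. -/
theorem relative_left_adjoint_iff_comma_fst_has_reflection
    {A : Type u₁} [Category.{v₁} A] {B : Type u₂} [Category.{v₂} B]
    {C : Type u₃} [Category.{v₃} C] (j : A ⥤ C) (g : B ⥤ C) :
    ((∃ (f : A ⥤ B) (θ : j ⟶ f ⋙ g),
        ∀ (a : A) (b : B), Function.Bijective
          (fun α : f.obj a ⟶ b => θ.app a ≫ g.map α)) ↔
      (∃ (L : A ⥤ Comma j g) (adj : L ⊣ Comma.fst j g) (h : L ⋙ Comma.fst j g = 𝟭 A),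
        adj.unit = eqToHom h.symm)) ∧
    ((∃ (L : A ⥤ Comma j g) (adj : L ⊣ Comma.fst j g) (h : L ⋙ Comma.fst j g = 𝟭 A),
        adj.unit = eqToHom h.symm) ↔
      (∃ (L : A ⥤ Comma j g) (adj : L ⊣ Comma.fst j g), IsIso adj.unit)) := by
  suffices tfae : List.TFAE [_, _, _] from ⟨tfae.out 0 1, tfae.out 1 2⟩
  tfae_have 1 → 2
  | ⟨f, θ, hθ⟩ => ⟨_, Comma.liftAdjunction f θ hθ, rfl, Comma.liftAdjunction_unit f θ hθ⟩
  tfae_have 2 → 3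
  | ⟨F, adj, _, hunit⟩ => ⟨F, adj, hunit ▸ inferInstance⟩
  tfae_have 3 → 1
  | ⟨F, adj, _⟩ => ⟨F ⋙ Comma.snd j g, Comma.relativeUnit adj.unit,
      Comma.bijective_relativeUnit_app_comp_map adj⟩
  tfae_finish
end

section
/- For every monoidal category X there exist a strict monoidal category Q, a strong monoidal functor L : Q ⥤ X, and a strong monoidal functor S : X ⥤ Q, such that the composite strong monoidal functor S followed by L is equal to the identity monoidal functor of X, and the underlying functor of L is an equivalence of categories. -/
open CategoryTheory MonoidalCategory

universe v v₁ v₂ v₃ u u₁ u₂ u₃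

/-- A monoidal category is strict when its associator and unitors are identities (modulo
the corresponding equalities of objects). -/
def MonoidalIsStrict (C : Type u) [Category.{v} C] [MonoidalCategory C] : Prop :=
  (∀ a b c : C, ∃ h : (a ⊗ b) ⊗ c = a ⊗ (b ⊗ c), (α_ a b c).hom = eqToHom h) ∧
  (∀ a : C, ∃ h : 𝟙_ C ⊗ a = a, (λ_ a).hom = eqToHom h) ∧
  (∀ a : C, ∃ h : a ⊗ 𝟙_ C = a, (ρ_ a).hom = eqToHom h)

/-- A strong monoidal functor, bundled as a functor together with a monoidal structure
on it (whose unit and tensorator constraints are isomorphisms). -/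
structure StrongMonoidalFunctor (C : Type u₁) (D : Type u₂) [Category.{v₁} C]
    [Category.{v₂} D] [MonoidalCategory C] [MonoidalCategory D] where
  toFunctor : C ⥤ D
  monoidal : toFunctor.Monoidal

namespace StrongMonoidalFunctor

variable {C : Type u₁} {D : Type u₂} {E : Type u₃} [Category.{v₁} C] [Category.{v₂} D]
  [Category.{v₃} E] [MonoidalCategory C] [MonoidalCategory D] [MonoidalCategory E]

/-- The identity strong monoidal functor. -/
def id (C : Type u₁) [Category.{v₁} C] [MonoidalCategory C] : StrongMonoidalFunctor C C :=
  ⟨𝟭 C, inferInstance⟩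

/-- Composition of strong monoidal functors. -/
def comp (F : StrongMonoidalFunctor C D) (G : StrongMonoidalFunctor D E) :
    StrongMonoidalFunctor C E :=
  letI := F.monoidal
  letI := G.monoidal
  ⟨F.toFunctor ⋙ G.toFunctor, inferInstance⟩

end StrongMonoidalFunctor

/-- `Q` is a strictification of `X` admitting a strict monoidal retraction: `Q` is strict
monoidal, and there are strong monoidal functors `L : Q ⥤ X` and `S : X ⥤ Q` with
`S` followed by `L` equal to the identity monoidal functor of `X` and with the underlying
functor of `L` an equivalence of categories. -/
def IsStrictificationWithRetraction (X : Type u) [Category.{v} X] [MonoidalCategory X]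
    (Q : Type u) [Category.{v} Q] [MonoidalCategory Q] : Prop :=
  MonoidalIsStrict Q ∧
  ∃ (L : StrongMonoidalFunctor Q X) (S : StrongMonoidalFunctor X Q),
    S.comp L = StrongMonoidalFunctor.id X ∧ L.toFunctor.IsEquivalence

/-!
Objects of the strictification are words in the objects of `X`, tensored by concatenation; a
morphism `l ⟶ l'` is a morphism of `X` between the left-bracketed products `∏ l` and `∏ l'`.
The comparison isomorphism `∏ l ⊗ ∏ l' ≅ ∏ (l ++ l')` is the image of an isomorphism of the free
monoidal category on `X` (both sides have the same normal form), so every coherence condition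
follows from Mac Lane's coherence theorem: the free monoidal category is thin. Since `∏ [x] = x`,
`x ↦ [x]` is a strict section of the fully faithful forgetful functor; the counit of the resulting
equivalence is the identity, and since it is monoidal the composite monoidal structure is the
identity one.
-/

namespace CategoryTheory.FreeMonoidalCategory

variable {C : Type u}

-- reducible, so that simp sees `ofList []` as `𝟙_ _`
abbrev ofList : List C → FreeMonoidalCategory C
  | [] => 𝟙_ _
  | a :: as => as.foldl (· ⊗ of ·) (of a)

def isoOfFullNormalizeEq {A B : FreeMonoidalCategory C}
    (h : (fullNormalize C).obj A = (fullNormalize C).obj B) : A ≅ B :=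
  (fullNormalizeIso C).app A ≪≫ eqToIso (congrArg inclusion.obj h) ≪≫
    ((fullNormalizeIso C).app B).symm

lemma normalizeObj_foldl (A : FreeMonoidalCategory C) (n : NormalMonoidalObject C) (l : List C) :
    normalizeObj (l.foldl (· ⊗ of ·) A) n = l.foldl .tensor (normalizeObj A n) := by
  induction l generalizing A with
  | nil => rfl
  | cons b l ih => exact ih _

lemma normalizeObj_ofList (l : List C) (n : NormalMonoidalObject C) :
    normalizeObj (ofList l) n = l.foldl .tensor n := by
  cases l with
  | nil => rfl
  | cons a l => exact normalizeObj_foldl _ _ _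

lemma fullNormalize_obj_ofList_tensor (l l' : List C) :
    (fullNormalize C).obj (ofList l ⊗ ofList l') = (fullNormalize C).obj (ofList (l ++ l')) := by
  change Discrete.mk _ = Discrete.mk _
  simp only [normalizeObj_tensor, normalizeObj_ofList, List.foldl_append]

def ofListTensorIso (l l' : List C) : ofList l ⊗ ofList l' ≅ ofList (l ++ l') :=
  isoOfFullNormalizeEq (fullNormalize_obj_ofList_tensor l l')

section Project

variable {D : Type*} [Category D] [MonoidalCategory D] (f : C → D)

lemma project_mapIso_congr {A B : FreeMonoidalCategory C} (i j : A ≅ B) :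
    (project f).mapIso i = (project f).mapIso j :=
  congrArg _ (Subsingleton.elim i j)

lemma project_mapIso_tensorIso {A B A' B' : FreeMonoidalCategory C} (i : A ≅ B) (j : A' ≅ B') :
    (project f).mapIso (i ⊗ᵢ j) = (project f).mapIso i ⊗ᵢ (project f).mapIso j := by
  ext
  change (project f).map (i.hom ⊗ₘ j.hom) = (project f).map i.hom ⊗ₘ (project f).map j.hom
  induction i.hom using Quotient.inductionOn
  induction j.hom using Quotient.inductionOn
  rfl

lemma project_mapIso_associator (A B A' : FreeMonoidalCategory C) :
    (project f).mapIso (α_ A B A') =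
      α_ ((project f).obj A) ((project f).obj B) ((project f).obj A') :=
  rfl

lemma project_mapIso_leftUnitor (A : FreeMonoidalCategory C) :
    (project f).mapIso (λ_ A) = λ_ ((project f).obj A) :=
  rfl

lemma project_mapIso_rightUnitor (A : FreeMonoidalCategory C) :
    (project f).mapIso (ρ_ A) = ρ_ ((project f).obj A) :=
  rfl

end Project

end CategoryTheory.FreeMonoidalCategory

namespace CategoryTheory.MonoidalCategory

open FreeMonoidalCategory InducedCategory

variable (X : Type u) [Category.{v} X] [MonoidalCategory X]

def tensorList (l : List X) : X :=
  (project id).obj (ofList l)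

abbrev Strictification : Type u :=
  InducedCategory X (tensorList X)

namespace Strictification

variable {X}

def tensorListIso (l l' : List X) : tensorList X l ⊗ tensorList X l' ≅ tensorList X (l ++ l') :=
  (project id).mapIso (ofListTensorIso l l')

instance : MonoidalCategoryStruct (Strictification X) where
  tensorObj (l l' : List X) := l ++ l'
  whiskerLeft l _ _ f := homMk ((tensorListIso l _).inv ≫ (tensorList X l ◁ f.hom) ≫
    (tensorListIso l _).hom)
  whiskerRight f l := homMk ((tensorListIso _ l).inv ≫ (f.hom ▷ tensorList X l) ≫
    (tensorListIso _ l).hom)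
  tensorHom f g := homMk ((tensorListIso _ _).inv ≫ (f.hom ⊗ₘ g.hom) ≫ (tensorListIso _ _).hom)
  tensorUnit := ([] : List X)
  associator l₁ l₂ l₃ := eqToIso (List.append_assoc l₁ l₂ l₃)
  leftUnitor l := eqToIso (List.nil_append l)
  rightUnitor l := eqToIso (List.append_nil l)

def inducingFunctorData : Monoidal.InducingFunctorData (inducedFunctor (tensorList X)) where
  μIso := tensorListIso
  εIso := Iso.refl _
  associator_eq (l₁ l₂ l₃ : List X) := by
    have h := project_mapIso_congr id (eqToIso (congrArg ofList (List.append_assoc l₁ l₂ l₃)))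
      (((ofListTensorIso _ _).symm ≪≫ ((ofListTensorIso l₁ l₂).symm ⊗ᵢ Iso.refl _)) ≪≫
        α_ _ _ _ ≪≫ ((Iso.refl _ ⊗ᵢ ofListTensorIso l₂ l₃) ≪≫ ofListTensorIso _ _))
    simp only [Functor.mapIso_trans, Functor.mapIso_symm, project_mapIso_tensorIso,
      Functor.mapIso_refl, project_mapIso_associator, eqToIso_map] at h
    exact (InducedCategory.eqToHom_hom _).trans (congrArg Iso.hom h)
  leftUnitor_eq (l : List X) := by
    have h := project_mapIso_congr id (eqToIso (congrArg ofList (List.nil_append l)))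
      (((ofListTensorIso [] l).symm ≪≫ (Iso.refl _ ⊗ᵢ Iso.refl _)) ≪≫ λ_ _)
    simp only [Functor.mapIso_trans, Functor.mapIso_symm, project_mapIso_tensorIso,
      Functor.mapIso_refl, project_mapIso_leftUnitor, eqToIso_map] at h
    exact (InducedCategory.eqToHom_hom _).trans (congrArg Iso.hom h)
  rightUnitor_eq (l : List X) := by
    have h := project_mapIso_congr id (eqToIso (congrArg ofList (List.append_nil l)))
      (((ofListTensorIso l []).symm ≪≫ (Iso.refl _ ⊗ᵢ Iso.refl _)) ≪≫ ρ_ _)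
    simp only [Functor.mapIso_trans, Functor.mapIso_symm, project_mapIso_tensorIso,
      Functor.mapIso_refl, project_mapIso_rightUnitor, eqToIso_map] at h
    exact (InducedCategory.eqToHom_hom _).trans (congrArg Iso.hom h)

instance : MonoidalCategory (Strictification X) :=
  Monoidal.induced _ inducingFunctorData

lemma monoidalIsStrict : MonoidalIsStrict (Strictification X) :=
  ⟨fun a b c => ⟨List.append_assoc a b c, rfl⟩, fun a => ⟨List.nil_append a, rfl⟩,
    fun a => ⟨List.append_nil a, rfl⟩⟩

variable (X) in
def singleton : X ⥤ Strictification X where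
  obj x := [x]
  map f := homMk f

variable (X) in
def equivalence : Strictification X ≌ X :=
  .mk (inducedFunctor _) (singleton X)
    (NatIso.ofComponents (fun l => InducedCategory.isoMk (Iso.refl (tensorList X l)))
      fun f => by ext; exact (Category.comp_id _).trans (Category.id_comp _).symm)
    (Iso.refl _)

lemma equivalence_counit_app (x : X) : (equivalence X).counit.app x = 𝟙 x :=
  rfl

instance : (equivalence X).functor.Monoidal :=
  Monoidal.fromInducedMonoidal _ inducingFunctorData

noncomputable instance : (equivalence X).inverse.Monoidal :=
  (equivalence X).inverseMonoidal

instance : (equivalence X).IsMonoidal :=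
  ⟨rfl, fun _ _ => rfl⟩

lemma inverse_comp_functor_ε :
    Functor.LaxMonoidal.ε ((equivalence X).inverse ⋙ (equivalence X).functor) = 𝟙 _ := by
  have h := NatTrans.IsMonoidal.unit (τ := (equivalence X).counit)
  simp only [equivalence_counit_app] at h
  exact (Category.comp_id _).symm.trans h

lemma inverse_comp_functor_μ (x y : X) :
    Functor.LaxMonoidal.μ ((equivalence X).inverse ⋙ (equivalence X).functor) x y = 𝟙 _ := by
  have h := NatTrans.IsMonoidal.tensor (τ := (equivalence X).counit) x y
  simp only [equivalence_counit_app] at h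
  refine (Category.comp_id _).symm.trans (h.trans ?_)
  exact (by simp : (𝟙 x ⊗ₘ 𝟙 y) ≫ 𝟙 (x ⊗ y) = 𝟙 (x ⊗ y))

lemma inverse_comp_functor_eq_id :
    StrongMonoidalFunctor.comp ⟨(equivalence X).inverse, inferInstance⟩
      ⟨(equivalence X).functor, inferInstance⟩ = StrongMonoidalFunctor.id X := by
  change (⟨𝟭 X, _⟩ : StrongMonoidalFunctor X X) = ⟨𝟭 X, _⟩
  congr 1
  apply Functor.Monoidal.toLaxMonoidal_injective
  ext x y
  · exact inverse_comp_functor_ε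
  · exact inverse_comp_functor_μ x y

end Strictification

end CategoryTheory.MonoidalCategory

/-- MacLane strictification with a strict monoidal retraction: every monoidal category
is a monoidal retract of a strict monoidal category via an underlying equivalence. -/
theorem exists_strictification_with_retraction
    (X : Type u) [Category.{v} X] [MonoidalCategory X] :
    ∃ (Q : Type u) (iQ : Category.{v} Q) (mQ : @MonoidalCategory Q iQ),
      @IsStrictificationWithRetraction X _ _ Q iQ mQ :=
  ⟨Strictification X, inferInstance, inferInstance, Strictification.monoidalIsStrict, _, _,
    Strictification.inverse_comp_functor_eq_id,
    (Strictification.equivalence X).isEquivalence_functor⟩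
end

section
/- There exist a small strict monoidal category M and a strong monoidal functor E : M ⥤ M with E ∘ E = E (equality of strong monoidal functors) such that the idempotent E does not split in the category of small strict monoidal categories and strong monoidal functors: there is no small strict monoidal category N with strong monoidal functors R : M ⥤ N and I : N ⥤ M satisfying R ∘ I = 𝟭_N and I ∘ R = E. -/
/-!
The category `M` has the powers `ℕ^n` as objects and all maps between them, made strict by
letting `ℕ^m ⊗ ℕ^n = ℕ^(m+n)`. Since `ℕ^(k+1) ≅ ℕ`, replacing every nonzero power by `ℕ` itself
and conjugating maps by chosen bijections gives an idempotent strong monoidal endofunctor `E`.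

Suppose `E = I ∘ R` with `R ∘ I = 𝟭` through a strict `N`, and put `n = R ℕ`, so `I n = ℕ`.
Since `I = I ∘ R ∘ I = E ∘ I`, every `I x` is fixed by `E`; as `I (n ⊗ n) ≅ I n ⊗ I n = ℕ²` is
not a point, `I (n ⊗ n) = ℕ = I n`, and applying `R` gives `n ⊗ n = n`. Strictness of `N` now
makes the tensorator `ℕ² → ℕ` of `I` at `(n, n)` an associative injective binary operation on
`ℕ`, which cannot exist (Isbell): `(x y) z = x (y z)` and injectivity give `x y = x`, and then
`y` cannot be recovered from `x y`.
-/

open CategoryTheory MonoidalCategory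

universe v v₁ v₂ v₃ u u₁ u₂ u₃

/-- The idempotent strong monoidal endofunctor `E` of `M` splits through the small strict
monoidal category `N`: there are strong monoidal functors `R : M ⥤ N` and `I : N ⥤ M`
with `R ∘ I = 𝟭 N` and `I ∘ R = E`. -/
def SplitsAt (M : Type) [Category.{0} M] [MonoidalCategory M]
    (E : StrongMonoidalFunctor M M)
    (N : Type) [Category.{0} N] [MonoidalCategory N] : Prop :=
  MonoidalIsStrict N ∧
  ∃ (R : StrongMonoidalFunctor M N) (I : StrongMonoidalFunctor N M),
    I.comp R = StrongMonoidalFunctor.id N ∧ R.comp I = E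

theorem subsingleton_of_injective_uncurry_of_assoc {α : Type*} {op : α → α → α}
    (hinj : Function.Injective (Function.uncurry op))
    (hassoc : ∀ a b c, op (op a b) c = op a (op b c)) : Subsingleton α := by
  have hleft (a b : α) : op a b = a :=
    congrArg Prod.fst (hinj (hassoc a b b) : (op a b, b) = (a, op b b))
  refine ⟨fun a b => congrArg Prod.snd (hinj ?_ : (a, a) = (a, b))⟩
  simp [hleft]

theorem Fin.exists_eq_append {α : Type*} {m n : ℕ} (v : Fin (m + n) → α) :
    ∃ u w, v = Fin.append u w :=
  ⟨_, _, Fin.append_castAdd_natAdd.symm⟩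

open Functor.LaxMonoidal in
theorem CategoryTheory.Functor.LaxMonoidal.μ_assoc_of_tensorObj_self_eq {C : Type u₁}
    {D : Type u₂} [Category.{v₁} C] [Category.{v₂} D] [MonoidalCategory C] [MonoidalCategory D]
    (F : C ⥤ D) [F.LaxMonoidal] {c : C} (hc : c ⊗ c = c) (hα : ∃ h, (α_ c c c).hom = eqToHom h) :
    (μ F c c ≫ F.map (eqToHom hc)) ▷ F.obj c ≫ μ F c c ≫ F.map (eqToHom hc) =
      (α_ _ _ _).hom ≫ F.obj c ◁ (μ F c c ≫ F.map (eqToHom hc)) ≫ μ F c c ≫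
        F.map (eqToHom hc) := by
  obtain ⟨_, hα⟩ := hα
  have := associativity_assoc F c c c (F.map (eqToHom (by rw [hc, hc]) : c ⊗ c ⊗ c ⟶ c))
  simp only [comp_whiskerRight, MonoidalCategory.whiskerLeft_comp, Category.assoc,
    μ_natural_left_assoc, μ_natural_right_assoc]
  simpa [hα, eqToHom_map] using this

namespace StrongMonoidalFunctor

open Functor.LaxMonoidal Functor.Monoidal

section

variable {C : Type u₁} {D : Type u₂} {E : Type u₃} [Category.{v₁} C] [Category.{v₂} D]
  [Category.{v₃} E] [MonoidalCategory C] [MonoidalCategory D] [MonoidalCategory E]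

instance (F : StrongMonoidalFunctor C D) : F.toFunctor.Monoidal := F.monoidal

theorem ext {F G : StrongMonoidalFunctor C D}
    (h_obj : ∀ X, F.toFunctor.obj X = G.toFunctor.obj X)
    (h_map : ∀ X Y (f : X ⟶ Y),
      F.toFunctor.map f = eqToHom (h_obj X) ≫ G.toFunctor.map f ≫ eqToHom (h_obj Y).symm)
    (hε : ε F.toFunctor ≫ eqToHom (h_obj _) = ε G.toFunctor)
    (hμ : ∀ X Y, μ F.toFunctor X Y ≫ eqToHom (h_obj _) =
      eqToHom (congrArg₂ (· ⊗ ·) (h_obj X) (h_obj Y)) ≫ μ G.toFunctor X Y) :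
    F = G := by
  obtain ⟨F, mF⟩ := F
  obtain ⟨G, mG⟩ := G
  obtain rfl : F = G := CategoryTheory.Functor.ext h_obj h_map
  congr
  apply toLaxMonoidal_injective
  ext X Y
  · simpa using hε
  · simpa using hμ X Y

@[simp]
theorem comp_toFunctor (F : StrongMonoidalFunctor C D) (G : StrongMonoidalFunctor D E) :
    (F.comp G).toFunctor = F.toFunctor ⋙ G.toFunctor :=
  rfl

theorem comp_ε (F : StrongMonoidalFunctor C D) (G : StrongMonoidalFunctor D E) :
    ε (F.comp G).toFunctor = ε G.toFunctor ≫ G.toFunctor.map (ε F.toFunctor) :=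
  rfl

theorem comp_μ (F : StrongMonoidalFunctor C D) (G : StrongMonoidalFunctor D E) (X Y : C) :
    μ (F.comp G).toFunctor X Y =
      μ G.toFunctor (F.toFunctor.obj X) (F.toFunctor.obj Y) ≫ G.toFunctor.map (μ F.toFunctor X Y) :=
  rfl

end

variable {C : Type u} [Category.{v} C] [MonoidalCategory C] (p : C → C) (e : ∀ X, X ≅ p X)

def idCopyObj : StrongMonoidalFunctor C C :=
  ⟨(𝟭 C).copyObj p e, .transport ((𝟭 C).isoCopyObj p e)⟩

@[simp]
theorem idCopyObj_obj (X : C) : (idCopyObj p e).toFunctor.obj X = p X := rfl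

@[simp]
theorem idCopyObj_map {X Y : C} (f : X ⟶ Y) :
    (idCopyObj p e).toFunctor.map f = (e X).inv ≫ f ≫ (e Y).hom := rfl

@[simp]
theorem idCopyObj_ε : ε (idCopyObj p e).toFunctor = (e (𝟙_ C)).hom :=
  (transport_ε _).trans (Category.id_comp _)

@[simp]
theorem idCopyObj_μ (X Y : C) :
    μ (idCopyObj p e).toFunctor X Y = ((e X).inv ⊗ₘ (e Y).inv) ≫ (e (X ⊗ Y)).hom :=
  (transport_μ _ X Y).trans (by simp)

theorem idCopyObj_comp_self (hp : ∀ X, p (p X) = p X)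
    (he : ∀ X, e (p X) = eqToIso (hp X).symm) :
    (idCopyObj p e).comp (idCopyObj p e) = idCopyObj p e := by
  refine ext hp (fun X Y f => ?_) ?_ fun X Y => ?_
  · simp [he]
  · rw [comp_ε]
    dsimp only [comp_toFunctor, Functor.comp_obj, idCopyObj_obj]
    simp [he]
  · rw [comp_μ]
    dsimp only [comp_toFunctor, Functor.comp_obj, idCopyObj_obj]
    simp [he, tensorHom_def (eqToHom _)]

end StrongMonoidalFunctor

/-- The powers `X ^ n` of a type and all maps between them, with the strict monoidal structure
`X ^ m ⊗ X ^ n = X ^ (m + n)`: the strictification of the cartesian powers of `X`. -/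
structure FinPow (X : Type u) where
  n : ℕ

namespace FinPow

variable {X : Type u}

instance : Category.{u} (FinPow X) where
  Hom a b := (Fin a.n → X) → (Fin b.n → X)
  id _ := id
  comp f g := g ∘ f

@[simp]
theorem id_apply (a : FinPow X) (v : Fin a.n → X) : (𝟙 a : a ⟶ a) v = v := rfl

@[simp]
theorem comp_apply {a b c : FinPow X} (f : a ⟶ b) (g : b ⟶ c) (v : Fin a.n → X) :
    (f ≫ g) v = g (f v) := rfl

theorem eqToHom_apply {a b : FinPow X} (h : a = b) (v : Fin a.n → X) :
    (eqToHom h : a ⟶ b) v = v ∘ Fin.cast (congrArg n h.symm) := by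
  subst h
  rfl

def prodMap {a b c d : FinPow X} (f : a ⟶ b) (g : c ⟶ d) :
    (Fin (a.n + c.n) → X) → (Fin (b.n + d.n) → X) :=
  fun v => Fin.append (f fun i => v (Fin.castAdd _ i)) (g fun i => v (Fin.natAdd _ i))

instance : MonoidalCategoryStruct (FinPow X) where
  tensorObj a b := ⟨a.n + b.n⟩
  tensorHom := prodMap
  whiskerLeft a _ _ g := prodMap (𝟙 a) g
  whiskerRight f b := prodMap f (𝟙 b)
  tensorUnit := ⟨0⟩
  associator a b c := eqToIso (congrArg mk (Nat.add_assoc a.n b.n c.n))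
  leftUnitor a := eqToIso (congrArg mk (Nat.zero_add a.n))
  rightUnitor _ := eqToIso rfl

@[simp]
theorem tensorObj_n (a b : FinPow X) : (a ⊗ b).n = a.n + b.n := rfl

@[simp]
theorem tensorHom_apply_append {a b c d : FinPow X} (f : a ⟶ b) (g : c ⟶ d) (u : Fin a.n → X)
    (w : Fin c.n → X) : (f ⊗ₘ g) (Fin.append u w) = Fin.append (f u) (g w) := by
  simp [MonoidalCategoryStruct.tensorHom, prodMap]

@[simp]
theorem whiskerLeft_apply_append (a : FinPow X) {b c : FinPow X} (g : b ⟶ c) (u : Fin a.n → X)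
    (w : Fin b.n → X) : (a ◁ g) (Fin.append u w) = Fin.append u (g w) :=
  tensorHom_apply_append (𝟙 a) g u w

@[simp]
theorem whiskerRight_apply_append {a b : FinPow X} (f : a ⟶ b) (c : FinPow X) (u : Fin a.n → X)
    (w : Fin c.n → X) : (f ▷ c) (Fin.append u w) = Fin.append (f u) w :=
  tensorHom_apply_append f (𝟙 c) u w

theorem associator_apply_append (a b c : FinPow X) (u : Fin a.n → X) (v : Fin b.n → X)
    (w : Fin c.n → X) :
    (α_ a b c).hom (Fin.append (Fin.append u v) w) = Fin.append u (Fin.append v w) := by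
  ext i
  simp [MonoidalCategoryStruct.associator, eqToHom_apply, Fin.append_assoc]

theorem leftUnitor_apply_append (a : FinPow X) (u : Fin 0 → X) (w : Fin a.n → X) :
    (λ_ a).hom (Fin.append u w) = w := by
  obtain rfl : u = Fin.elim0 := Subsingleton.elim _ _
  ext i
  simp [MonoidalCategoryStruct.leftUnitor, eqToHom_apply]

theorem rightUnitor_apply_append (a : FinPow X) (u : Fin a.n → X) (w : Fin 0 → X) :
    (ρ_ a).hom (Fin.append u w) = u := by
  obtain rfl : w = Fin.elim0 := Subsingleton.elim _ _
  ext i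
  simp [MonoidalCategoryStruct.rightUnitor]

instance : MonoidalCategory (FinPow X) :=
  .ofTensorHom
    (id_tensorHom_id := fun a b => by
      funext v
      obtain ⟨u, w, rfl⟩ := Fin.exists_eq_append v
      simp)
    (tensorHom_comp_tensorHom := fun f₁ f₂ g₁ g₂ => by
      funext v
      obtain ⟨u, w, rfl⟩ := Fin.exists_eq_append v
      simp)
    (associator_naturality := fun f₁ f₂ f₃ => by
      funext v
      obtain ⟨v, w₃, rfl⟩ := Fin.exists_eq_append v
      obtain ⟨w₁, w₂, rfl⟩ := Fin.exists_eq_append v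
      simp [associator_apply_append])
    (leftUnitor_naturality := fun f => by
      funext v
      obtain ⟨u, w, rfl⟩ := Fin.exists_eq_append v
      simp [leftUnitor_apply_append])
    (rightUnitor_naturality := fun f => by
      funext v
      obtain ⟨u, w, rfl⟩ := Fin.exists_eq_append v
      simp [rightUnitor_apply_append])
    (pentagon := fun a b c d => by
      funext v
      obtain ⟨v, w₄, rfl⟩ := Fin.exists_eq_append v
      obtain ⟨v, w₃, rfl⟩ := Fin.exists_eq_append v
      obtain ⟨w₁, w₂, rfl⟩ := Fin.exists_eq_append v
      simp [associator_apply_append])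
    (triangle := fun a b => by
      funext v
      obtain ⟨v, w₂, rfl⟩ := Fin.exists_eq_append v
      obtain ⟨w₁, w₀, rfl⟩ := Fin.exists_eq_append v
      simp [associator_apply_append, leftUnitor_apply_append, rightUnitor_apply_append])

theorem monoidalIsStrict : MonoidalIsStrict (FinPow X) :=
  ⟨fun a b c => ⟨congrArg mk (Nat.add_assoc a.n b.n c.n), rfl⟩,
    fun a => ⟨congrArg mk (Nat.zero_add a.n), rfl⟩, fun _ => ⟨rfl, rfl⟩⟩

def equivOfIso {a b : FinPow X} (i : a ≅ b) : (Fin a.n → X) ≃ (Fin b.n → X) :=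
  ⟨i.hom, i.inv, congrFun i.hom_inv_id, congrFun i.inv_hom_id⟩

def isoOfEquiv {a b : FinPow X} (e : (Fin a.n → X) ≃ (Fin b.n → X)) : a ≅ b :=
  ⟨e, e.symm, funext e.symm_apply_apply, funext e.apply_symm_apply⟩

theorem subsingleton_iff [Nontrivial X] (a : FinPow X) :
    Subsingleton (Fin a.n → X) ↔ a.n = 0 := by
  refine ⟨fun h => ?_, fun h => ?_⟩
  · by_contra ha
    have : Nonempty (Fin a.n) := ⟨⟨0, Nat.pos_of_ne_zero ha⟩⟩
    exact not_subsingleton (Fin a.n → X) h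
  · rw [h]
    infer_instance

theorem subsingleton_of_assoc {a : FinPow X} (m : a ⊗ a ⟶ a) [IsIso m]
    (hm : m ▷ a ≫ m = (α_ a a a).hom ≫ a ◁ m ≫ m) : Subsingleton (Fin a.n → X) := by
  refine subsingleton_of_injective_uncurry_of_assoc (op := fun u w => m (Fin.append u w))
    (fun ⟨u, w⟩ ⟨u', w'⟩ h => ?_) fun u v w => ?_
  · have h' := (equivOfIso (asIso m)).injective h
    exact Prod.ext
      (funext fun i => by simpa only [Fin.append_left] using congrFun h' (Fin.castAdd _ i))
      (funext fun i => by simpa only [Fin.append_right] using congrFun h' (Fin.natAdd _ i))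
  · simpa [associator_apply_append] using congrFun hm (Fin.append (Fin.append u v) w)

def collapseObj : FinPow X → FinPow X
  | ⟨0⟩ => ⟨0⟩
  | ⟨_ + 1⟩ => ⟨1⟩

theorem collapseObj_collapseObj (a : FinPow X) :
    collapseObj (collapseObj a) = collapseObj a := by
  rcases a with ⟨_ | _⟩ <;> rfl

theorem collapseObj_of_n_ne_zero {a : FinPow X} (ha : a.n ≠ 0) : collapseObj a = ⟨1⟩ := by
  rcases a with ⟨_ | _⟩
  · exact absurd rfl ha
  · rfl

/-- The case `k = 0` is `Equiv.refl`, so that `collapseIso` is the identity on the image of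
`collapseObj`; this is what makes `collapse` idempotent on the nose. -/
def succPowEquiv (e : X × X ≃ X) : ∀ k : ℕ, (Fin (k + 1) → X) ≃ (Fin 1 → X)
  | 0 => Equiv.refl _
  | k + 1 => (Fin.consEquiv fun _ => X).symm.trans <|
      ((Equiv.refl X).prodCongr ((succPowEquiv e k).trans (Equiv.funUnique (Fin 1) X))).trans <|
        e.trans (Equiv.funUnique (Fin 1) X).symm

def collapseIso (e : X × X ≃ X) : ∀ a : FinPow X, a ≅ collapseObj a
  | ⟨0⟩ => Iso.refl _
  | ⟨k + 1⟩ => isoOfEquiv (succPowEquiv e k)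

def collapse (e : X × X ≃ X) : StrongMonoidalFunctor (FinPow X) (FinPow X) :=
  StrongMonoidalFunctor.idCopyObj collapseObj (collapseIso e)

theorem collapse_comp_self (e : X × X ≃ X) : (collapse e).comp (collapse e) = collapse e :=
  StrongMonoidalFunctor.idCopyObj_comp_self _ _ collapseObj_collapseObj
    fun a => by rcases a with ⟨_ | _⟩ <;> rfl

open Functor.LaxMonoidal Functor.Monoidal in
theorem not_splitsAt_collapse {X : Type} [Nontrivial X] (e : X × X ≃ X) (N : Type)
    [Category.{0} N] [MonoidalCategory N] : ¬ SplitsAt (FinPow X) (collapse e) N := by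
  rintro ⟨hN, R, I, hIR, hRI⟩
  have hRI_obj (a : FinPow X) : I.toFunctor.obj (R.toFunctor.obj a) = collapseObj a :=
    Functor.congr_obj (congrArg StrongMonoidalFunctor.toFunctor hRI) a
  have hIR_obj (x : N) : R.toFunctor.obj (I.toFunctor.obj x) = x :=
    Functor.congr_obj (congrArg StrongMonoidalFunctor.toFunctor hIR) x
  set n := R.toFunctor.obj ⟨1⟩
  have hIn : I.toFunctor.obj n = ⟨1⟩ := hRI_obj _
  have hnn : n ⊗ n = n := by
    have hsq : (I.toFunctor.obj (n ⊗ n)).n ≠ 0 := fun h => by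
      have := (subsingleton_iff _).2 h
      rw [← (equivOfIso (μIso I.toFunctor n n)).subsingleton_congr, subsingleton_iff,
        tensorObj_n, hIn] at this
      simp at this
    have hfix : I.toFunctor.obj (n ⊗ n) = I.toFunctor.obj n := by
      rw [← hIR_obj (n ⊗ n), hRI_obj, collapseObj_of_n_ne_zero hsq, hIn]
    rw [← hIR_obj (n ⊗ n), hfix, hIR_obj]
  have := subsingleton_of_assoc _ (μ_assoc_of_tensorObj_self_eq I.toFunctor hnn (hN.1 n n n))
  rw [subsingleton_iff, hIn] at this
  exact one_ne_zero this

end FinPow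

/-- Idempotents need not split in the category of small strict monoidal categories and
strong monoidal functors: there is a small strict monoidal category `M` with an idempotent
strong monoidal endofunctor `E` admitting no splitting through any small strict monoidal
category. -/
theorem exists_nonsplit_monoidal_idempotent :
    ∃ (M : Type) (iM : Category.{0} M) (mM : @MonoidalCategory M iM),
      @MonoidalIsStrict M iM mM ∧
      ∃ E : @StrongMonoidalFunctor M M iM iM mM mM,
        @StrongMonoidalFunctor.comp M M M iM iM iM mM mM mM E E = E ∧
        ¬ ∃ (N : Type) (iN : Category.{0} N) (mN : @MonoidalCategory N iN),
            @SplitsAt M iM mM E N iN mN :=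
  ⟨FinPow ℕ, inferInstance, inferInstance, FinPow.monoidalIsStrict, FinPow.collapse Nat.pairEquiv,
    FinPow.collapse_comp_self _, fun ⟨N, _, _, h⟩ => FinPow.not_splitsAt_collapse _ N h⟩
end

section
/- Let F : S ⥤ T be a functor that is bijective on objects, and let B be any category. Then the precomposition functor (T ⥤ B) ⥤ (S ⥤ B), sending G to F ⋙ G, is a discrete isofibration: for every functor G : T ⥤ B, every functor H : S ⥤ B, and every natural isomorphism ψ : H ≅ F ⋙ G, there exists a unique pair consisting of a functor G' : T ⥤ B with F ⋙ G' = H and a natural isomorphism Ψ : G' ≅ G whose whiskering along F equals ψ (i.e. Ψ.app (F.obj s) = ψ.app s for every object s of S). -/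
/-!
Choosing for each object `t` of `T` its unique preimage `σ t`, the lift is `G` with its objects
replaced by `H.obj (σ t)`, transported along the components of `ψ`. A natural isomorphism into
`G` determines its source on morphisms by conjugation, so the lift is forced by its objects and
components, which `F` reaches since it is surjective on objects.
-/

open CategoryTheory

universe v₁ v₂ v₃ u₁ u₂ u₃

namespace CategoryTheory.Functor

variable {C : Type u₁} [Category.{v₁} C] {D : Type u₂} [Category.{v₂} D]
  {E : Type u₃} [Category.{v₃} E]

lemma eq_of_iso_of_app_eq {K₁ K₂ K : C ⥤ D} (α : K₁ ≅ K) (β : K₂ ≅ K)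
    (hobj : ∀ X, K₁.obj X = K₂.obj X) (happ : ∀ X, α.hom.app X = eqToHom (hobj X) ≫ β.hom.app X) :
    K₁ = K₂ :=
  ext_of_iso (α ≪≫ β.symm) hobj fun X => by simp [happ]

lemma sigma_iso_eq_of_whiskerLeft_eq (F : C ⥤ D) (hF : Function.Surjective F.obj) {K : D ⥤ E}
    {l₁ l₂ : Σ K' : D ⥤ E, K' ≅ K} (h : F ⋙ l₁.1 = F ⋙ l₂.1)
    (happ : whiskerLeft F l₁.2.hom = eqToHom h ≫ whiskerLeft F l₂.2.hom) : l₁ = l₂ := by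
  obtain ⟨K₁, α⟩ := l₁
  obtain ⟨K₂, β⟩ := l₂
  have hobj : ∀ Y, K₁.obj Y = K₂.obj Y := hF.forall.2 (congr_obj h)
  have happ' : ∀ Y, α.hom.app Y = eqToHom (hobj Y) ≫ β.hom.app Y :=
    hF.forall.2 fun X => by simpa [eqToHom_app] using NatTrans.congr_app happ X
  obtain rfl := eq_of_iso_of_app_eq α β hobj happ'
  congr
  ext Y
  simpa using happ' Y

end CategoryTheory.Functor

open Functor in
/-- Precomposition with a bijective-on-objects functor is a discrete isofibration: every
natural isomorphism `ψ : H ≅ F ⋙ G` lifts uniquely to a natural isomorphism `Ψ : G' ≅ G`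
with `F ⋙ G' = H` whose whiskering along `F` is `ψ`. -/
theorem precomposition_bijective_on_objects_discrete_isofibration
    {S : Type u₁} [Category.{v₁} S] {T : Type u₂} [Category.{v₂} T]
    {B : Type u₃} [Category.{v₃} B]
    (F : S ⥤ T) (hF : Function.Bijective F.obj) :
    ∀ (G : T ⥤ B) (H : S ⥤ B) (ψ : H ≅ F ⋙ G),
      ∃! l : Σ G' : T ⥤ B, G' ≅ G,
        ∃ h : F ⋙ l.1 = H, ψ.hom = eqToHom h.symm ≫ Functor.whiskerLeft F l.2.hom := by
  intro G H ψ
  let σ := (Equiv.ofBijective F.obj hF).symm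
  have hFσ : ∀ t, F.obj (σ t) = t := (Equiv.ofBijective F.obj hF).apply_symm_apply
  have hσF : ∀ s, σ (F.obj s) = s := (Equiv.ofBijective F.obj hF).symm_apply_apply
  let G' := G.copyObj (fun t => H.obj (σ t))
    fun t => eqToIso (congrArg G.obj (hFσ t)).symm ≪≫ (ψ.app (σ t)).symm
  let Ψ : G' ≅ G := (G.isoCopyObj _ _).symm
  have hobj : ∀ s, (F ⋙ G').obj s = H.obj s := fun s => congrArg H.obj (hσF s)
  have hΨ : ∀ s, Ψ.hom.app (F.obj s) = eqToHom (hobj s) ≫ ψ.hom.app s := fun s => by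
    dsimp [Ψ]
    exact eqToHom_naturality ψ.hom.app (hσF s)
  have hcomp : F ⋙ G' = H := eq_of_iso_of_app_eq (isoWhiskerLeft F Ψ) ψ hobj hΨ
  have hlift : ψ.hom = eqToHom hcomp.symm ≫ whiskerLeft F Ψ.hom := by
    ext s
    simp [hΨ, eqToHom_app]
  refine ⟨⟨G', Ψ⟩, ⟨hcomp, hlift⟩, ?_⟩
  rintro ⟨G'', Ψ''⟩ ⟨h'', hlift''⟩
  refine sigma_iso_eq_of_whiskerLeft_eq F hF.surjective (h''.trans hcomp.symm) ?_
  rw [← cancel_epi (eqToHom h''.symm), ← hlift'', hlift, eqToHom_trans_assoc]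
end

section
/- Let J be a filtered category and D : J ⥤ Cat a diagram of small categories such that each category D.obj j has a terminal object and each transition functor D.map φ preserves terminal objects. Then for any colimit cocone c of D in Cat, the category c.pt has a terminal object, and each cocone component functor c.ι.app j : D.obj j ⥤ c.pt preserves terminal objects. -/
open CategoryTheory CategoryTheory.Limits

universe u

/-- A functor preserves terminal objects if it sends every terminal object to a terminal
object. -/
def PreservesTerminalObjs {A B : Type*} [Category A] [Category B] (F : A ⥤ B) : Prop :=
  ∀ X : A, IsTerminal X → Nonempty (IsTerminal (F.obj X))

/-!
Fix a terminal object `T₀` of `D j₀` and let `T'` be its image in the colimit. For `X` in `D j`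
and a cospan `ψ : j ⟶ l`, `χ : j₀ ⟶ l`, the image of `T₀` in `D l` is terminal, and the image in
the colimit of the unique map into it is an arrow `ι_j X ⟶ T'`. Filteredness makes this arrow
independent of the cospan, so these arrows form a cocone over `D` with apex `Arrow c.pt`. The
induced functor `c.pt ⥤ Arrow c.pt` is a natural transformation from the identity to the constant
functor at `T'` whose component at `T'` is an isomorphism, and that forces `T'` to be terminal.
-/

universe v

namespace CategoryTheory.Limits.IsTerminal

variable {C : Type*} [Category C] {T : C}

def ofNatTransToConst (η : 𝟭 C ⟶ (Functor.const C).obj T) [IsIso (η.app T)] :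
    IsTerminal T := by
  have hη : ∀ {X : C} (f : X ⟶ T), f ≫ η.app T = η.app X := fun f => by
    simpa using η.naturality f
  -- `η.app T` is an idempotent isomorphism
  have hηT : η.app T = 𝟙 T := by
    rw [← cancel_epi (η.app T), hη]
    exact (Category.comp_id _).symm
  exact .ofUniqueHom η.app fun X f => by simpa [hηT] using hη f

def ofArrowSection (A : C ⥤ Arrow C) (hL : A ⋙ Arrow.leftFunc = 𝟭 C)
    (hR : A ⋙ Arrow.rightFunc = (Functor.const C).obj T) [IsIso (A.obj T).hom] :
    IsTerminal T :=
  let η := eqToHom hL.symm ≫ Functor.whiskerLeft A Arrow.leftToRight ≫ eqToHom hR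
  have : IsIso (η.app T) := by
    simp only [η, NatTrans.comp_app, eqToHom_app, Functor.whiskerLeft_app,
      Arrow.leftToRight_app]
    have hL_T : IsIso (eqToHom (Functor.congr_obj hL.symm T)) := inferInstance
    have hR_T : IsIso (eqToHom (Functor.congr_obj hR T)) := inferInstance
    exact IsIso.comp_isIso' hL_T (IsIso.comp_isIso' ‹_› hR_T)
  ofNatTransToConst η

def toArrow (hT : IsTerminal T) : C ⥤ Arrow C where
  obj X := Arrow.mk (hT.from X)
  map f := Arrow.homMk f (𝟙 T) (hT.hom_ext _ _)

lemma comp_toArrow {D : Type*} [Category D] {T' : D} (hT : IsTerminal T) (hT' : IsTerminal T')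
    (F : C ⥤ D) (hF : F.obj T = T') : F ⋙ hT'.toArrow = hT.toArrow ⋙ F.mapArrow := by
  subst hF
  refine Functor.ext (fun X => Arrow.ext rfl rfl (hT'.hom_ext _ _)) fun X Y f => ?_
  ext
  · simp only [Arrow.comp_left, Arrow.eqToHom_left]
    erw [eqToHom_refl, eqToHom_refl, Category.id_comp, Category.comp_id]
    rfl
  · simp only [Arrow.comp_right, Arrow.eqToHom_right]
    erw [eqToHom_refl, Category.id_comp, Category.comp_id]
    exact F.map_id T |>.symm

end CategoryTheory.Limits.IsTerminal

namespace CategoryTheory.Cat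

open IsFiltered

section

variable {J : Type*} [Category J] {D : J ⥤ Cat.{v, u}} (c : Cocone D)

lemma map_comp_ι_app {j k : J} (φ : j ⟶ k) :
    (D.map φ).toFunctor ⋙ (c.ι.app k).toFunctor = (c.ι.app j).toFunctor := by
  rw [← c.w φ]; rfl

lemma obj_ι_app_map {j k : J} (φ : j ⟶ k) (X : D.obj j) :
    (c.ι.app k).toFunctor.obj ((D.map φ).toFunctor.obj X) = (c.ι.app j).toFunctor.obj X :=
  Functor.congr_obj (map_comp_ι_app c φ) X

end

section

variable {J : Type*} [Category J] {D : J ⥤ Cat.{u, u}} (c : Cocone D)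
  (hD : ∀ {j k : J} (φ : j ⟶ k), PreservesTerminalObjs (D.map φ).toFunctor)
  {j₀ : J} {T₀ : D.obj j₀} (hT₀ : IsTerminal T₀)

noncomputable def arrowToTerminalImage {j l : J} (ψ : j ⟶ l) (χ : j₀ ⟶ l) :
    D.obj j ⥤ Arrow c.pt :=
  (D.map ψ).toFunctor ⋙ (hD χ T₀ hT₀).some.toArrow ⋙ (c.ι.app l).toFunctor.mapArrow

lemma arrowToTerminalImage_comp {j l m : J} (ψ : j ⟶ l) (χ : j₀ ⟶ l) (u : l ⟶ m) :
    arrowToTerminalImage c hD hT₀ (ψ ≫ u) (χ ≫ u) = arrowToTerminalImage c hD hT₀ ψ χ := by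
  have hu : (D.map u).toFunctor.obj ((D.map χ).toFunctor.obj T₀) =
      (D.map (χ ≫ u)).toFunctor.obj T₀ := by
    rw [D.map_comp]; rfl
  simp only [arrowToTerminalImage, D.map_comp, Cat.Hom.comp_toFunctor, Functor.assoc]
  rw [← Functor.assoc (D.map u).toFunctor, IsTerminal.comp_toArrow (hD χ T₀ hT₀).some _ _ hu,
    Functor.assoc, ← map_comp_ι_app c u]
  rfl

lemma arrowToTerminalImage_eq [IsFilteredOrEmpty J] {j l l' : J} (ψ : j ⟶ l)
    (χ : j₀ ⟶ l) (ψ' : j ⟶ l') (χ' : j₀ ⟶ l') :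
    arrowToTerminalImage c hD hT₀ ψ χ = arrowToTerminalImage c hD hT₀ ψ' χ' := by
  obtain ⟨m, u, u', hψ, hχ⟩ := IsFiltered.bowtie ψ ψ' χ χ'
  rw [← arrowToTerminalImage_comp c hD hT₀ ψ χ u, ← arrowToTerminalImage_comp c hD hT₀ ψ' χ' u',
    hψ, hχ]

lemma map_comp_arrowToTerminalImage {j k l : J} (φ : j ⟶ k) (ψ : k ⟶ l) (χ : j₀ ⟶ l) :
    (D.map φ).toFunctor ⋙ arrowToTerminalImage c hD hT₀ ψ χ =
      arrowToTerminalImage c hD hT₀ (φ ≫ ψ) χ := by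
  simp only [arrowToTerminalImage, D.map_comp, Cat.Hom.comp_toFunctor, Functor.assoc]

lemma arrowToTerminalImage_comp_leftFunc {j l : J} (ψ : j ⟶ l) (χ : j₀ ⟶ l) :
    arrowToTerminalImage c hD hT₀ ψ χ ⋙ Arrow.leftFunc = (c.ι.app j).toFunctor :=
  map_comp_ι_app c ψ

lemma arrowToTerminalImage_comp_rightFunc {j l : J} (ψ : j ⟶ l) (χ : j₀ ⟶ l) :
    arrowToTerminalImage c hD hT₀ ψ χ ⋙ Arrow.rightFunc =
      (Functor.const _).obj ((c.ι.app j₀).toFunctor.obj T₀) :=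
  Functor.hext (fun _ => obj_ι_app_map c χ T₀) fun _ _ _ =>
    (heq_of_eq ((c.ι.app l).toFunctor.map_id _)).trans
      (congr_arg_heq (𝟙 ·) (obj_ι_app_map c χ T₀))

noncomputable def arrowCocone [IsFilteredOrEmpty J] : Cocone D where
  pt := Cat.of (Arrow c.pt)
  ι.app j := ⟨arrowToTerminalImage c hD hT₀ (leftToMax j j₀) (rightToMax j j₀)⟩
  ι.naturality _ _ _ := Cat.ext <|
    (map_comp_arrowToTerminalImage c hD hT₀ _ _ _).trans
      (arrowToTerminalImage_eq c hD hT₀ _ _ _ _)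

lemma isIso_arrowToTerminalImage_obj_hom {j l : J} (ψ : j ⟶ l) (χ : j₀ ⟶ l) {X : D.obj j}
    (hX : IsTerminal ((D.map ψ).toFunctor.obj X)) :
    IsIso ((arrowToTerminalImage c hD hT₀ ψ χ).obj X).hom :=
  Functor.map_isIso (c.ι.app l).toFunctor (hX.uniqueUpToIso (hD χ T₀ hT₀).some).hom

end

lemma nonempty_isTerminal_obj_ι_app {J : Type*} [Category J] [IsFilteredOrEmpty J]
    {D : J ⥤ Cat.{u, u}} (c : Cocone D) (hc : IsColimit c)
    (hD : ∀ {j k : J} (φ : j ⟶ k), PreservesTerminalObjs (D.map φ).toFunctor)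
    {j₀ : J} {T₀ : D.obj j₀} (hT₀ : IsTerminal T₀) :
    Nonempty (IsTerminal ((c.ι.app j₀).toFunctor.obj T₀)) := by
  let AC := arrowCocone c hD hT₀
  let A := (hc.desc AC).toFunctor
  have hL : hc.desc AC ≫ ⟨Arrow.leftFunc⟩ = 𝟙 c.pt := hc.hom_ext fun j => by
    rw [hc.fac_assoc]
    exact Cat.ext (arrowToTerminalImage_comp_leftFunc c hD hT₀ _ _)
  have hR : hc.desc AC ≫ ⟨Arrow.rightFunc⟩ =
      ⟨(Functor.const c.pt).obj ((c.ι.app j₀).toFunctor.obj T₀)⟩ := hc.hom_ext fun j => by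
    rw [hc.fac_assoc]
    exact Cat.ext (arrowToTerminalImage_comp_rightFunc c hD hT₀ _ _)
  have hA : A.obj ((c.ι.app j₀).toFunctor.obj T₀) =
      (arrowToTerminalImage c hD hT₀ (leftToMax j₀ j₀) (rightToMax j₀ j₀)).obj T₀ :=
    Functor.congr_obj (congrArg Cat.Hom.toFunctor (hc.fac _ j₀)) T₀
  have : IsIso (A.obj ((c.ι.app j₀).toFunctor.obj T₀)).hom := by
    rw [hA]
    exact isIso_arrowToTerminalImage_obj_hom c hD hT₀ _ _ (hD _ T₀ hT₀).some
  exact ⟨.ofArrowSection A (congrArg Cat.Hom.toFunctor hL) (congrArg Cat.Hom.toFunctor hR)⟩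

end CategoryTheory.Cat

/-- Categories with a terminal object and terminal-object-preserving functors are closed
under filtered colimits in `Cat`: the colimit of a filtered diagram of categories with
terminal objects, along terminal-object-preserving transition functors, has a terminal
object, and the colimit cocone components preserve terminal objects. -/
theorem terminal_objects_in_filtered_colimit_of_categories
    (J : Type u) [SmallCategory J] [IsFiltered J] (D : J ⥤ Cat.{u, u})
    (hT : ∀ j : J, ∃ T : D.obj j, Nonempty (IsTerminal T))
    (hM : ∀ {j k : J} (φ : j ⟶ k), PreservesTerminalObjs (D.map φ).toFunctor)
    (c : Cocone D) (hc : IsColimit c) :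
    (∃ T : c.pt, Nonempty (IsTerminal T)) ∧
    ∀ j : J, PreservesTerminalObjs (c.ι.app j).toFunctor := by
  refine ⟨?_, fun j X hX => Cat.nonempty_isTerminal_obj_ι_app c hc hM hX⟩
  obtain ⟨j₀⟩ := IsFiltered.nonempty (C := J)
  obtain ⟨T₀, ⟨hT₀⟩⟩ := hT j₀
  exact ⟨_, Cat.nonempty_isTerminal_obj_ι_app c hc hM hT₀⟩
end

section
/- Let F : A ⥤ B be a functor, let Iso(A) denote the category whose objects are the isomorphisms of A and whose morphisms are commutative squares between them, and let t : Iso(A) ⥤ P_F be the functor sending an isomorphism α : a ≅ a' to the object (a, F.obj a', F-image of α) of the iso-comma category P_F, and a square (u, u') to the morphism (u, F.map u'). Then F is an isofibration if and only if t is a surjective equivalence, i.e. both an equivalence of categories and an isofibration. -/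
open CategoryTheory CategoryTheory.Limits

universe v₁ v₂ u₁ u₂

variable {A : Type u₁} [Category.{v₁} A] {B : Type u₂} [Category.{v₂} B]

/-- The category `Iso(A)` of isomorphisms in `A`, with commutative squares as morphisms,
realised as the full subcategory of the arrow category on the invertible arrows. -/
abbrev IsoCat (A : Type u₁) [Category.{v₁} A] : Type _ :=
  ObjectProperty.FullSubcategory (fun f : Arrow A => IsIso f.hom)

/-- The comparison functor `t : Iso(A) ⥤ P_F`, sending an isomorphism `α : a ≅ a'` to the
object `(a, F.obj a', F.map α)` of the iso-comma category. -/
def tComparison (F : A ⥤ B) : IsoCat A ⥤ IsoComma F where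
  obj X := ⟨⟨X.obj.left, F.obj X.obj.right, F.map X.obj.hom⟩,
    by haveI : IsIso X.obj.hom := X.property; dsimp; infer_instance⟩
  map {X Y} f := ObjectProperty.homMk <| show (⟨X.obj.left, F.obj X.obj.right, F.map X.obj.hom⟩ : Comma F (𝟭 B)) ⟶
      ⟨Y.obj.left, F.obj Y.obj.right, F.map Y.obj.hom⟩ from
    { left := f.hom.left
      right := F.map f.hom.right
      w := by
        dsimp
        rw [← F.map_comp, ← F.map_comp]
        congr 1
        have := f.hom.w; first | exact this | exact this.symm | simpa using this | simpa using this.symm }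
  map_id X := by
    apply ObjectProperty.hom_ext
    apply CommaMorphism.ext
    · rfl
    · exact F.map_id _
  map_comp f g := by
    apply ObjectProperty.hom_ext
    apply CommaMorphism.ext
    · rfl
    · exact F.map_comp _ _

/-!
A square between isomorphisms `α` and `α'` is determined by its top edge `u`, the bottom edge
being forced to be `α⁻¹ ≫ u ≫ α'`; hence `t` is always fully faithful. A fully faithful functor
is an equivalence and an isofibration exactly when it is surjective on objects, and surjectivity
of `t` on objects is the lifting property of `F` for isomorphisms `β : F.obj a ≅ b`.
-/

section

variable {C : Type*} [Category C] {D : Type*} [Category D] {G : C ⥤ D}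

lemma Isofibration.obj_surjective [G.EssSurj] (hG : Isofibration G) :
    Function.Surjective G.obj := fun Y =>
  let ⟨X, _, h, _⟩ := hG _ Y (G.objObjPreimageIso Y)
  ⟨X, h⟩

lemma Isofibration.of_fullyFaithful (hG : G.FullyFaithful) (hs : Function.Surjective G.obj) :
    Isofibration G := by
  intro X Y η
  obtain ⟨X', rfl⟩ := hs Y
  exact ⟨X', hG.preimageIso η, rfl, by ext; simp⟩

lemma CategoryTheory.Functor.FullyFaithful.isEquivalence_and_isofibration_iff_surjective
    (hG : G.FullyFaithful) : G.IsEquivalence ∧ Isofibration G ↔ Function.Surjective G.obj := by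
  refine ⟨fun ⟨_, h⟩ => h.obj_surjective, fun hs => ⟨?_, .of_fullyFaithful hG hs⟩⟩
  have := hG.full
  have := hG.faithful
  have := G.essSurj_of_surj hs
  exact {}

end

noncomputable def fullyFaithfulTComparison (F : A ⥤ B) : (tComparison F).FullyFaithful where
  preimage {X Y} g :=
    have := X.property
    ObjectProperty.homMk (Arrow.homMk g.hom.left (inv X.obj.hom ≫ g.hom.left ≫ Y.obj.hom))
  map_preimage {X Y} g := by
    have := X.property
    ext
    · rfl
    · simpa [tComparison] using g.hom.w
  preimage_map {X Y} f := by
    have := X.property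
    ext
    · rfl
    · simp [tComparison]

lemma isofibration_iff_tComparison_obj_surjective {F : A ⥤ B} :
    Isofibration F ↔ Function.Surjective (tComparison F).obj := by
  constructor
  · rintro hF ⟨⟨a, b, β⟩, _⟩
    obtain ⟨a', α, rfl, hα⟩ := hF a b (asIso β)
    refine ⟨⟨Arrow.mk α.hom, inferInstanceAs (IsIso α.hom)⟩, ?_⟩
    obtain rfl : F.map α.hom = β := by simpa using congrArg Iso.hom hα
    rfl
  · intro hs a b β
    obtain ⟨⟨⟨x, x', f⟩, _⟩, hX⟩ := hs ⟨⟨a, b, β.hom⟩, inferInstance⟩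
    simp only [tComparison, ObjectProperty.FullSubcategory.mk.injEq, Comma.mk.injEq] at hX
    obtain ⟨rfl, rfl, hβ⟩ := hX
    exact ⟨x', asIso f, rfl, by ext; simpa using eq_of_heq hβ⟩

/-- A functor `F` is an isofibration if and only if the comparison functor
`t : Iso(A) ⥤ P_F` is a surjective equivalence, i.e. both an equivalence of categories and
an isofibration. -/
theorem isofibration_iff_tComparison_surjective_equivalence (F : A ⥤ B) :
    Isofibration F ↔
      ((tComparison F).IsEquivalence ∧ Isofibration (tComparison F)) :=
  isofibration_iff_tComparison_obj_surjective.trans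
    (fullyFaithfulTComparison F).isEquivalence_and_isofibration_iff_surjective.symm
end
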